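/- Let N be a finitely generated nilpotent group of class c with generating set B₀ = {σ_{0,1},…,σ_{0,d₀}}, and for 1 ≤ k ≤ c−1 let C_k(B₀) = {σ_{k,1},…,σ_{k,d_k}} be the basic commutators of weight k. For chosen positive integers a_{k,j}, let N_a be the subgroup generated by all σ_{k,j}^{a_{k,j}}. Then every g ∈ N can be written as g = (∏_{k=0}^{c-1} ∏_{j=1}^{d_k} σ_{k,j}^{b_{k,j}}) · g_a with 0 ≤ b_{k,j} < a_{k,j} and g_a ∈ N_a. In particular the index [N : N_a] is at most ∏_{k,j} a_{k,j}. -/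

import Mathlib

open scoped commutatorElement

/-- The set of basic commutators of weight `k` built from a generating set `B`:
`C₀(B) = B` and `C_{k+1}(B) = {[g, b] : g ∈ C_k(B), b ∈ B}`. -/
def commSet {G : Type*} [Group G] (B : Set G) : ℕ → Set G
  | 0 => B
  | (k + 1) => {x | ∃ g ∈ commSet B k, ∃ b ∈ B, x = ⁅g, b⁆}

/-!
Let `H k` be the subgroup generated by the basic commutators of weight at least `k`. Since the
lower central series reaches `1` at step `c`, `H c = 1`, and descending induction shows that each
`H k` is normal with `[H k, N] ≤ H (k + 1)`: a commutator of weight `k` commutes with the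
generators modulo `H (k + 1)`, hence with everything. In `N ⧸ H (k + 1)` the images of the
`σ k j` are therefore central and generate the image of `H k`, so an element of `H k` is
`∏ⱼ σ k j ^ eⱼ` modulo `H (k + 1)`. Writing `eⱼ = bⱼ + a k j * qⱼ` with `0 ≤ bⱼ < a k j`, the
central factors `(σ k j ^ a k j) ^ qⱼ ∈ N_a` move to the right at the cost of an element of
`H (k + 1)`, which is treated in the same way. Finally, the products with bounded exponents meet
every left coset of `N_a`, which bounds the index.
-/

open Subgroup

section CommutatorFiltration

variable {G : Type*} [Group G]

theorem normal_of_le_upperCentralSeriesStep {H K : Subgroup G} [K.Normal]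
    (hH : H ≤ K.upperCentralSeriesStep) (hK : K ≤ H) : H.Normal where
  conj_mem g hg x := by
    have hconj : x * g * x⁻¹ = ⁅g, x⁆⁻¹ * g := by rw [commutatorElement_def]; group
    rw [hconj]
    exact mul_mem (inv_mem (hK (hH hg x))) hg

theorem mem_upperCentralSeriesStep_of_forall_mem {K : Subgroup G} [K.Normal] {B : Set G}
    (hB : closure B = ⊤) {x : G} (hx : ∀ b ∈ B, ⁅x, b⁆ ∈ K) :
    x ∈ K.upperCentralSeriesStep := by
  have hB' : closure (QuotientGroup.mk' K '' B) = ⊤ := by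
    rw [← MonoidHom.map_closure, hB, ← MonoidHom.range_eq_map, QuotientGroup.range_mk']
  rw [Subgroup.upperCentralSeriesStep_eq_comap_center, mem_comap, center_eq_iInf hB']
  simp only [mem_iInf, Set.forall_mem_image, mem_centralizer_singleton_iff]
  intro b hb
  rw [← commutatorElement_eq_one_iff_mul_comm, ← map_commutatorElement,
    QuotientGroup.mk'_apply, QuotientGroup.eq_one_iff]
  exact hx b hb

variable (B : Set G)

def commFiltration (k : ℕ) : Subgroup G :=
  closure {x | ∃ m, k ≤ m ∧ x ∈ commSet B m}

theorem commSet_subset_commFiltration {k m : ℕ} (h : k ≤ m) :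
    commSet B m ⊆ commFiltration B k :=
  fun _ hx => subset_closure ⟨m, h, hx⟩

theorem commFiltration_succ_le (k : ℕ) : commFiltration B (k + 1) ≤ commFiltration B k :=
  closure_mono fun _ ⟨m, hm, hx⟩ => ⟨m, by omega, hx⟩

theorem commFiltration_zero (hB : closure B = ⊤) : commFiltration B 0 = ⊤ :=
  eq_top_iff.2 <| hB ▸ (closure_le _).2 (commSet_subset_commFiltration B (m := 0) le_rfl)

theorem commFiltration_le_closure_union (k : ℕ) :
    commFiltration B k ≤ closure (commSet B k ∪ commFiltration B (k + 1)) := by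
  refine closure_le _ |>.2 ?_
  rintro x ⟨m, hkm, hx⟩
  rcases hkm.eq_or_lt with rfl | hlt
  · exact subset_closure (Or.inl hx)
  · exact subset_closure (Or.inr (commSet_subset_commFiltration B hlt hx))

theorem commSet_subset_lowerCentralSeries :
    ∀ k, commSet B k ⊆ (⊤ : Subgroup G).lowerCentralSeries k
  | 0 => fun x _ => mem_top x
  | k + 1 => by
    rintro _ ⟨g, hg, b, -, rfl⟩
    exact commutator_mem_commutator (commSet_subset_lowerCentralSeries k hg) (mem_top b)

theorem commFiltration_eq_bot {c k : ℕ} (hc : (⊤ : Subgroup G).lowerCentralSeries c = ⊥)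
    (hk : c ≤ k) : commFiltration B k = ⊥ := by
  rw [commFiltration, closure_eq_bot_iff]
  rintro x ⟨m, hkm, hx⟩
  have hmem := Subgroup.lowerCentralSeries_antitone ⊤ (hk.trans hkm)
    (commSet_subset_lowerCentralSeries B m hx)
  rwa [hc, mem_bot] at hmem

theorem commFiltration_le_upperCentralSeriesStep (hB : closure B = ⊤) (k : ℕ)
    [(commFiltration B (k + 1)).Normal] :
    commFiltration B k ≤ (commFiltration B (k + 1)).upperCentralSeriesStep := by
  refine closure_le _ |>.2 ?_
  rintro x ⟨m, hkm, hx⟩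
  rcases hkm.eq_or_lt with rfl | hlt
  · exact mem_upperCentralSeriesStep_of_forall_mem hB fun b hb =>
      commSet_subset_commFiltration B le_rfl ⟨x, hx, b, hb, rfl⟩
  · exact fun y => commutator_le_left _ ⊤ <|
      commutator_mem_commutator (commSet_subset_commFiltration B hlt hx) (mem_top y)

theorem commFiltration_normal (hB : closure B = ⊤) {c : ℕ}
    (hc : (⊤ : Subgroup G).lowerCentralSeries c = ⊥) (k : ℕ) : (commFiltration B k).Normal := by
  suffices ∀ n k, c ≤ k + n → (commFiltration B k).Normal from this c k (by omega)
  intro n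
  induction n with
  | zero =>
    intro k hk
    rw [commFiltration_eq_bot B hc (by omega : c ≤ k)]
    infer_instance
  | succ n ih =>
    intro k hk
    have := ih (k + 1) (by omega)
    exact normal_of_le_upperCentralSeriesStep
      (commFiltration_le_upperCentralSeriesStep B hB k) (commFiltration_succ_le B k)

end CommutatorFiltration

section BoundedExponents

variable {G : Type*} [Group G]

theorem exists_lt_zpow_eq_pow_mul_zpow_pow (x : G) (e : ℤ) {a : ℕ} (ha : 0 < a) :
    ∃ r < a, ∃ q : ℤ, x ^ e = x ^ r * (x ^ a) ^ q := by
  have ha' : (0 : ℤ) < a := by exact_mod_cast ha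
  refine ⟨(e % a).toNat, by have := Int.emod_lt_of_pos e ha'; omega, e / a, ?_⟩
  rw [← zpow_natCast, Int.toNat_of_nonneg (Int.emod_nonneg _ ha'.ne'), ← zpow_natCast x a,
    ← zpow_mul, ← zpow_add, Int.emod_add_mul_ediv]

theorem exists_bounded_prod_mul_of_mem_closure {A : Type*} [CommGroup A] {n : ℕ}
    (t : Fin n → A) {a : Fin n → ℕ} (ha : ∀ i, 0 < a i) {z : A}
    (hz : z ∈ closure (Set.range t)) :
    ∃ r : Fin n → ℕ, (∀ i, r i < a i) ∧ ∃ m ∈ closure (Set.range fun i => t i ^ a i),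
      z = ((List.finRange n).map fun i => t i ^ r i).prod * m := by
  obtain ⟨e, rfl⟩ := mem_closure_range_iff_of_fintype.1 hz
  choose r hr q hq using fun i => exists_lt_zpow_eq_pow_mul_zpow_pow (t i) (e i) (ha i)
  refine ⟨r, hr, ∏ i, (t i ^ a i) ^ q i,
    prod_mem fun i _ => zpow_mem (subset_closure (Set.mem_range_self i)) _, ?_⟩
  rw [← Fin.prod_univ_def, ← Finset.prod_mul_distrib]
  exact Finset.prod_congr rfl fun i _ => hq i

open scoped IsMulCommutative in
theorem exists_bounded_prod_mul_of_mem_closure_of_mem_center {n : ℕ} (t : Fin n → G)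
    (ht : ∀ i, t i ∈ center G) {a : Fin n → ℕ} (ha : ∀ i, 0 < a i) {g : G}
    (hg : g ∈ closure (Set.range t)) :
    ∃ r : Fin n → ℕ, (∀ i, r i < a i) ∧ ∃ m ∈ closure (Set.range fun i => t i ^ a i),
      g = ((List.finRange n).map fun i => t i ^ r i).prod * m := by
  let u : Fin n → center G := fun i => ⟨t i, ht i⟩
  have hmap (v : Fin n → center G) :
      (closure (Set.range v)).map (center G).subtype = closure (Set.range fun i => (v i : G)) := by
    rw [MonoidHom.map_closure, ← Set.range_comp]
    rfl
  obtain ⟨z, hz, rfl⟩ := (hmap u).symm ▸ hg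
  obtain ⟨r, hr, m, hm, rfl⟩ := exists_bounded_prod_mul_of_mem_closure u ha hz
  refine ⟨r, hr, m, hmap (fun i => u i ^ a i) ▸ mem_map_of_mem _ hm, ?_⟩
  simp [u, Function.comp_def]

theorem exists_mem_eq_mul_mul_of_mk_eq {K : Subgroup G} [K.Normal] {g p l : G}
    (h : (g : G ⧸ K) = (p * l : G)) : ∃ k ∈ K, g = p * k * l := by
  refine ⟨l * ((p * l)⁻¹ * g) * l⁻¹, ?_, by group⟩
  exact Normal.conj_mem inferInstance _ (QuotientGroup.eq.1 h.symm) l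

theorem exists_bounded_prod_mul_mul_of_mem_closure {K L : Subgroup G} [K.Normal] {n : ℕ}
    (t : Fin n → G) (ht : ∀ i, t i ∈ K.upperCentralSeriesStep) {a : Fin n → ℕ}
    (ha : ∀ i, 0 < a i) (htL : ∀ i, t i ^ a i ∈ L) {g : G}
    (hg : g ∈ closure (Set.range t ∪ K)) :
    ∃ r : Fin n → ℕ, (∀ i, r i < a i) ∧ ∃ h ∈ K, ∃ l ∈ L,
      g = ((List.finRange n).map fun i => t i ^ r i).prod * h * l := by
  set π := QuotientGroup.mk' K
  have hπg : π g ∈ closure (Set.range (π ∘ t)) := by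
    refine mem_comap.1 <| (closure_le (comap π _)).2 (Set.union_subset ?_ ?_) hg
    · rintro _ ⟨i, rfl⟩
      exact subset_closure (Set.mem_range_self i)
    · intro x hx
      have hπx : π x = 1 := (QuotientGroup.eq_one_iff x).2 hx
      rw [SetLike.mem_coe, mem_comap, hπx]
      exact one_mem _
  have hcent (i : Fin n) : π (t i) ∈ center (G ⧸ K) := by
    have := ht i
    rwa [Subgroup.upperCentralSeriesStep_eq_comap_center, mem_comap] at this
  obtain ⟨r, hr, m, hm, hgm⟩ :=
    exists_bounded_prod_mul_of_mem_closure_of_mem_center (π ∘ t) hcent ha hπg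
  have hmL : closure (Set.range fun i => π (t i) ^ a i) ≤ L.map π :=
    (closure_le _).2 (Set.range_subset_iff.2 fun i => ⟨_, htL i, map_pow π (t i) (a i)⟩)
  obtain ⟨l, hl, rfl⟩ := hmL hm
  obtain ⟨h, hh, rfl⟩ := exists_mem_eq_mul_mul_of_mk_eq (K := K) (g := g)
    (p := ((List.finRange n).map fun i => t i ^ r i).prod) (l := l) <| by
      change π g = π _
      rw [hgm, map_mul, map_list_prod, List.map_map]
      rfl
  exact ⟨r, hr, h, hh, l, hl, rfl⟩

theorem index_le_card_of_forall_exists_mul {L : Subgroup G} {X : Type*} [Finite X] (f : X → G)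
    (hf : ∀ g, ∃ x, ∃ l ∈ L, g = f x * l) : L.index ≤ Nat.card X := by
  refine Nat.card_le_card_of_surjective (fun x => (f x : G ⧸ L)) fun q => ?_
  obtain ⟨g, rfl⟩ := QuotientGroup.mk_surjective q
  obtain ⟨x, l, hl, rfl⟩ := hf g
  exact ⟨x, QuotientGroup.eq.2 (by simpa using hl)⟩

end BoundedExponents

section StandardForm

variable {N : Type*} [Group N] {d : ℕ → ℕ}

def layerProd (σ : ∀ k : ℕ, Fin (d k) → N) (k : ℕ) (e : Fin (d k) → ℕ) : N :=
  ((List.finRange (d k)).map fun j => σ k j ^ e j).prod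

theorem exists_standard_form_of_mem_commFiltration {c : ℕ} {σ : ∀ k : ℕ, Fin (d k) → N}
    {a : ∀ k : ℕ, Fin (d k) → ℕ} {Na : Subgroup N}
    (hc : (⊤ : Subgroup N).lowerCentralSeries c = ⊥)
    (hgen : closure (Set.range (σ 0)) = ⊤)
    (hcomm : ∀ k < c, Set.range (σ k) = commSet (Set.range (σ 0)) k)
    (ha : ∀ k j, 0 < a k j) (hNa : ∀ k < c, ∀ j, σ k j ^ a k j ∈ Na) (n k : ℕ) (hkn : k + n = c)
    {g : N} (hg : g ∈ commFiltration (Set.range (σ 0)) k) :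
    ∃ b : ∀ k, Fin (d k) → ℕ, (∀ m j, b m j < a m j) ∧ ∃ ga ∈ Na,
      g = ((List.range' k n).map fun m => layerProd σ m (b m)).prod * ga := by
  set B := Set.range (σ 0)
  induction n generalizing k g with
  | zero =>
    rw [commFiltration_eq_bot B hc (by omega : c ≤ k), mem_bot] at hg
    exact ⟨fun _ _ => 0, ha, 1, one_mem _, by simp [hg]⟩
  | succ n ih =>
    have hkc : k < c := by omega
    have := commFiltration_normal B hgen hc (k + 1)
    have hσ (j : Fin (d k)) : σ k j ∈ (commFiltration B (k + 1)).upperCentralSeriesStep :=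
      commFiltration_le_upperCentralSeriesStep B hgen k <|
        commSet_subset_commFiltration B le_rfl (hcomm k hkc ▸ Set.mem_range_self j)
    have hg' : g ∈ closure (Set.range (σ k) ∪ commFiltration B (k + 1)) :=
      hcomm k hkc ▸ commFiltration_le_closure_union B k hg
    obtain ⟨r, hr, h, hh, l, hl, rfl⟩ :=
      exists_bounded_prod_mul_mul_of_mem_closure (σ k) hσ (ha k) (hNa k hkc) hg'
    obtain ⟨b, hb, ga, hga, rfl⟩ := ih (k + 1) (by omega) hh
    refine ⟨Function.update b k r, fun m j => ?_, ga * l, mul_mem hga hl, ?_⟩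
    · rcases eq_or_ne m k with rfl | hm
      · simpa using hr j
      · simpa [hm] using hb m j
    · have htail : (List.range' (k + 1) n).map (fun m => layerProd σ m (Function.update b k r m))
          = (List.range' (k + 1) n).map fun m => layerProd σ m (b m) :=
        List.map_congr_left fun m hm => by
          rw [Function.update_of_ne (by rw [List.mem_range'_1] at hm; omega)]
      rw [List.range'_succ, List.map_cons, List.prod_cons, htail, Function.update_self]
      simp only [layerProd, mul_assoc]

theorem index_le_prod_of_forall_eq_mul {c : ℕ} {σ : ∀ k : ℕ, Fin (d k) → N}
    {a : ∀ k : ℕ, Fin (d k) → ℕ} {Na : Subgroup N}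
    (hform : ∀ g : N, ∃ (b : ∀ k, Fin (d k) → ℕ) (ga : N), (∀ k < c, ∀ j, b k j < a k j) ∧
      ga ∈ Na ∧ g = ((List.range c).map fun m => layerProd σ m (b m)).prod * ga) :
    Na.index ≤ ∏ k ∈ Finset.range c, ∏ j : Fin (d k), a k j := by
  let extend (x : ∀ k : Fin c, ∀ j : Fin (d k), Fin (a k j)) (m : ℕ) (j : Fin (d m)) : ℕ :=
    if h : m < c then x ⟨m, h⟩ j else 0
  calc Na.index
      ≤ Nat.card (∀ k : Fin c, ∀ j : Fin (d k), Fin (a k j)) := by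
        refine index_le_card_of_forall_exists_mul
          (fun x => ((List.range c).map fun m => layerProd σ m (extend x m)).prod) fun g => ?_
        obtain ⟨b, ga, hb, hga, rfl⟩ := hform g
        refine ⟨fun k j => ⟨b k j, hb k k.2 j⟩, ga, hga, ?_⟩
        congr 2
        exact List.map_congr_left fun m hm => by simp [extend, List.mem_range.1 hm]
    _ = ∏ k ∈ Finset.range c, ∏ j : Fin (d k), a k j := by
        simp [Fin.prod_univ_eq_prod_range (fun k => ∏ j : Fin (d k), a k j)]

end StandardForm

theorem standard_form_and_index_bound_general {N : Type*} [Group N] [Group.IsNilpotent N]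
    (c : ℕ) (hc : Group.nilpotencyClass N = c)
    (d : ℕ → ℕ) (σ : ∀ k : ℕ, Fin (d k) → N)
    (hgen : Subgroup.closure (Set.range (σ 0)) = ⊤)
    (hcomm : ∀ k : ℕ, k < c → Set.range (σ k) = commSet (Set.range (σ 0)) k)
    (a : ∀ k : ℕ, Fin (d k) → ℕ) (ha : ∀ k j, 1 ≤ a k j)
    (Na : Subgroup N)
    (hNa : Na = Subgroup.closure {x | ∃ k : ℕ, k < c ∧ ∃ j : Fin (d k), x = σ k j ^ a k j}) :
    (∀ g : N, ∃ (b : ∀ k : ℕ, Fin (d k) → ℕ) (ga : N),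
      (∀ k : ℕ, k < c → ∀ j, b k j < a k j) ∧ ga ∈ Na ∧
      g = ((List.range c).map fun k =>
            ((List.finRange (d k)).map fun j => σ k j ^ b k j).prod).prod * ga) ∧
    Na.index ≤ ∏ k ∈ Finset.range c, ∏ j : Fin (d k), a k j := by
  have hσNa : ∀ k < c, ∀ j, σ k j ^ a k j ∈ Na :=
    fun k hk j => hNa ▸ subset_closure ⟨k, hk, j, rfl⟩
  have hform : ∀ g : N, ∃ (b : ∀ k, Fin (d k) → ℕ) (ga : N), (∀ k < c, ∀ j, b k j < a k j) ∧
      ga ∈ Na ∧ g = ((List.range c).map fun m => layerProd σ m (b m)).prod * ga := by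
    intro g
    have hg : g ∈ commFiltration (Set.range (σ 0)) 0 := by
      rw [commFiltration_zero _ hgen]
      exact mem_top g
    obtain ⟨b, hb, ga, hga, hbga⟩ := exists_standard_form_of_mem_commFiltration
      (hc ▸ Subgroup.lowerCentralSeries_nilpotencyClass) hgen hcomm ha hσNa c 0 (zero_add c) hg
    exact ⟨b, ga, fun k _ j => hb k j, hga, by rwa [List.range_eq_range']⟩
  exact ⟨hform, index_le_prod_of_forall_eq_mul hform⟩

/-- **Standard form modulo powers of graded generators.** Let `N` be a finitely generated
nilpotent group of class `c` with generators `σ 0 j`, and let `σ k j` enumerate the basic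
commutators of weight `k`.  For positive integers `a k j`, let `N_a` be the subgroup
generated by the powers `σ k j ^ a k j`.  Then every `g ∈ N` can be written as the ordered
product `(∏_{k<c} ∏_j σ_{k,j}^{b_{k,j}}) · g_a` with `0 ≤ b_{k,j} < a_{k,j}` and
`g_a ∈ N_a`; in particular `[N : N_a] ≤ ∏_{k,j} a_{k,j}`. -/
theorem standard_form_and_index_bound {N : Type*} [Group N] [Group.IsNilpotent N]
    [Group.FG N] (c : ℕ) (hc : Group.nilpotencyClass N = c)
    (d : ℕ → ℕ) (σ : ∀ k : ℕ, Fin (d k) → N)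
    (hgen : Subgroup.closure (Set.range (σ 0)) = ⊤)
    (hcomm : ∀ k : ℕ, k < c → Set.range (σ k) = commSet (Set.range (σ 0)) k)
    (a : ∀ k : ℕ, Fin (d k) → ℕ) (ha : ∀ k j, 1 ≤ a k j)
    (Na : Subgroup N)
    (hNa : Na = Subgroup.closure {x | ∃ k : ℕ, k < c ∧ ∃ j : Fin (d k), x = σ k j ^ a k j}) :
    (∀ g : N, ∃ (b : ∀ k : ℕ, Fin (d k) → ℕ) (ga : N),
      (∀ k : ℕ, k < c → ∀ j, b k j < a k j) ∧ ga ∈ Na ∧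
      g = ((List.range c).map fun k =>
            ((List.finRange (d k)).map fun j => σ k j ^ b k j).prod).prod * ga) ∧
    Na.index ≤ ∏ k ∈ Finset.range c, ∏ j : Fin (d k), a k j :=
  standard_form_and_index_bound_general c hc d σ hgen hcomm a ha Na hNa
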